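/- arXiv:1803.01221 — 3 statements merged into one kernel-verified Lean document; each statement's English description precedes it below -/
import Mathlib

section
/- If a multiset S of n reals contains at most p values that differ from honest values, in the sense that S is obtained from a multiset T of honest values by arbitrarily changing at most p elements, and all honest values lie in an interval [a, b], then Γ_p(S)/n ∈ [a, b]. -/
/-- Trimmed-sum operator `Γ_p`: sort, replace the `p` smallest and `p` largest entries by
the mean of the remaining `n - 2p` entries, and return the sum of the resulting list. -/
noncomputable def trimmedSum (p : ℕ) (l : List ℝ) : ℝ :=
  let s := l.mergeSort (· ≤ ·)
  let mid := (s.drop p).take (l.length - 2 * p)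
  mid.sum + 2 * p * (mid.sum / (l.length - 2 * p))


open Finset

/-!
At most `p` entries of `S` differ from honest ones, so at most `p` of them lie below `a` and at
most `p` above `b`. After sorting, the entries at positions `p, …, n - p - 1` therefore all lie
in `[a, b]`. Replacing the `2p` extreme entries by the mean of these middle ones makes `Γ_p(S)`
equal to `n` times that mean, so `Γ_p(S) / n` is the mean of values in `[a, b]`.
-/

theorem List.countP_eq_card_filter_univ {α : Type*} (l : List α) (q : α → Bool) :
    l.countP q = #{i : Fin l.length | q (l.get i)} := by
  conv_lhs => rw [← l.map_get_finRange, List.countP_map]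
  rw [card_def, filter_val, ← Multiset.countP_eq_card_filter, Fin.univ_def, Multiset.coe_countP]
  simp [Function.comp_def]

theorem List.countP_le_card_filter_ne {α : Type*} [DecidableEq α] {S T : List α}
    (hlen : S.length = T.length) {P : α → Prop} [DecidablePred P] (hT : ∀ x ∈ T, P x) :
    S.countP (fun x => ¬P x) ≤ #{i : Fin S.length | S.get i ≠ T.get (Fin.cast hlen i)} := by
  rw [S.countP_eq_card_filter_univ]
  refine card_le_card fun i hi => ?_
  simp only [Finset.mem_filter, mem_univ, true_and, decide_eq_true_eq] at hi ⊢
  exact fun hST => hi (hST ▸ hT _ (List.get_mem _ _))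

section Sorted

variable {α : Type*} [LinearOrder α] {s : List α} {p : ℕ} {x : α}

theorem List.SortedLE.le_of_mem_drop (hs : s.SortedLE) {a : α} (hc : s.countP (· < a) ≤ p)
    (hx : x ∈ s.drop p) : a ≤ x := by
  by_contra! hxa
  have hp : p ≤ s.length := by
    by_contra!; simp [List.drop_of_length_le (le_of_lt this)] at hx
  have htake : (s.take p).countP (· < a) = p := by
    rw [List.countP_eq_length.2 fun y hy => decide_eq_true <|
      (hs.pairwise.rel_of_mem_take_of_mem_drop hy hx).trans_lt hxa]
    simp [hp]
  have hdrop : 0 < (s.drop p).countP (· < a) := List.countP_pos_iff.2 ⟨x, hx, by simpa using hxa⟩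
  have := s.take_append_drop p ▸ hc
  rw [List.countP_append] at this
  omega

theorem List.SortedLE.le_of_mem_take (hs : s.SortedLE) {b : α} (hc : s.countP (b < ·) ≤ p)
    (hx : x ∈ s.take (s.length - p)) : x ≤ b := by
  by_contra! hxb
  have hp : p ≤ s.length := by
    by_contra!; simp [Nat.sub_eq_zero_of_le (le_of_lt this)] at hx
  have hdrop : (s.drop (s.length - p)).countP (b < ·) = p := by
    rw [List.countP_eq_length.2 fun y hy => decide_eq_true <|
      hxb.trans_le (hs.pairwise.rel_of_mem_take_of_mem_drop hx hy)]
    simp only [List.length_drop]; omega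
  have htake : 0 < (s.take (s.length - p)).countP (b < ·) :=
    List.countP_pos_iff.2 ⟨x, hx, by simpa using hxb⟩
  have := s.take_append_drop (s.length - p) ▸ hc
  rw [List.countP_append] at this
  omega

end Sorted

theorem List.sum_div_length_mem_Icc {l : List ℝ} (hl : l ≠ []) {a b : ℝ}
    (h : ∀ x ∈ l, x ∈ Set.Icc a b) : l.sum / l.length ∈ Set.Icc a b := by
  have hpos : (0 : ℝ) < l.length := by exact_mod_cast List.length_pos_iff.2 hl
  constructor
  · rw [le_div_iff₀ hpos, mul_comm, ← nsmul_eq_mul]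
    exact List.card_nsmul_le_sum l a fun x hx => (h x hx).1
  · rw [div_le_iff₀ hpos, mul_comm, ← nsmul_eq_mul]
    exact List.sum_le_card_nsmul l b fun x hx => (h x hx).2

noncomputable def trimmedMiddle (p : ℕ) (l : List ℝ) : List ℝ :=
  ((l.mergeSort (· ≤ ·)).drop p).take (l.length - 2 * p)

section TrimmedMiddle

variable {p : ℕ} {l : List ℝ}

theorem length_trimmedMiddle (h : 2 * p ≤ l.length) :
    (trimmedMiddle p l).length = l.length - 2 * p := by
  simp only [trimmedMiddle, List.length_take, List.length_drop, List.length_mergeSort]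
  omega

theorem trimmedSum_div_length (h : 2 * p < l.length) :
    trimmedSum p l / l.length = (trimmedMiddle p l).sum / (trimmedMiddle p l).length := by
  have hcast : ((l.length - 2 * p : ℕ) : ℝ) = l.length - 2 * p := by push_cast [h.le]; ring
  have hpos : (0 : ℝ) < l.length - 2 * p := by rw [← hcast]; exact_mod_cast Nat.sub_pos_of_lt h
  have hn : (l.length : ℝ) ≠ 0 := by exact_mod_cast (Nat.zero_lt_of_lt h).ne'
  rw [length_trimmedMiddle h.le, hcast]
  set m := trimmedMiddle p l
  change (m.sum + 2 * p * (m.sum / (l.length - 2 * p))) / _ = _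
  field_simp
  ring

theorem mem_Icc_of_mem_trimmedMiddle {a b x : ℝ} (hc : l.countP (· ∉ Set.Icc a b) ≤ p)
    (hx : x ∈ trimmedMiddle p l) : x ∈ Set.Icc a b := by
  set s := l.mergeSort (· ≤ ·)
  have hs : s.SortedLE := List.sortedLE_mergeSort
  have hcount : ∀ q : ℝ → Prop, [DecidablePred q] → (∀ y, q y → y ∉ Set.Icc a b) →
      s.countP (q ·) ≤ p := fun q _ hq =>
    ((l.mergeSort_perm _).countP_eq _).trans_le <|
      (List.countP_mono_left fun y _ hy => decide_eq_true (hq y (of_decide_eq_true hy))).trans hc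
  refine ⟨hs.le_of_mem_drop (hcount (· < a) fun y hy h => hy.not_ge h.1)
    (List.mem_of_mem_take hx), hs.le_of_mem_take (hcount (b < ·) fun y hy h => hy.not_ge h.2) ?_⟩
  refine List.mem_of_mem_drop (i := p) ?_
  rw [List.drop_take, List.length_mergeSort, Nat.sub_sub, ← two_mul]
  exact hx

end TrimmedMiddle

/-- if `S` is obtained from an honest list `T` (all values in `[a,b]`) by
changing at most `p` entries, and `n > 2p`, then `Γ_p(S)/n ∈ [a,b]`. -/
theorem trimmedSum_byzantine_resilient (p : ℕ) (a b : ℝ) (S T : List ℝ)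
    (hlen : S.length = T.length) (hn : 2 * p < S.length)
    (hdiff : (Finset.univ.filter
        (fun i : Fin S.length => S.get i ≠ T.get (Fin.cast hlen i))).card ≤ p)
    (honest : ∀ x ∈ T, a ≤ x ∧ x ≤ b) :
    a ≤ trimmedSum p S / S.length ∧ trimmedSum p S / S.length ≤ b := by
  have hout : S.countP (· ∉ Set.Icc a b) ≤ p :=
    (S.countP_le_card_filter_ne hlen (P := (· ∈ Set.Icc a b)) honest).trans hdiff
  have hne : trimmedMiddle p S ≠ [] := by
    rw [← List.length_pos_iff, length_trimmedMiddle hn.le]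
    omega
  rw [trimmedSum_div_length hn]
  exact List.sum_div_length_mem_Icc hne fun x hx => mem_Icc_of_mem_trimmedMiddle hout hx
end

section
/- If the duals are initialized at zero, then at every ADMM iteration k the dual variables satisfy ∑_{i=1}^N α_i^k = 0, and consequently if the states reach consensus x_i^K = c for all i at some iteration K, then the next x-update gives x_i^{K+1} = (1/(1+2ρ|N_i|))(2ρ|N_i|c − α_i^K + f(z_i)); summing the fixed-point condition x_i^{K+1} = c over all i forces c = (1/N)∑_i f(z_i). -/
open Finset

lemma swap_sum {N : ℕ} (Nbr : Fin N → Finset (Fin N))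
    (hsym : ∀ i j, j ∈ Nbr i ↔ i ∈ Nbr j) (g : Fin N → ℝ) :
    ∑ i, ∑ j ∈ Nbr i, g j = ∑ j, ((Nbr j).card : ℝ) * g j := by
  have h : (∑ i, ∑ j ∈ Nbr i, g j) = ∑ j, ∑ i ∈ Nbr j, g j :=
    Finset.sum_comm' (by intro a b; simp [hsym a b])
  rw [h]
  refine Finset.sum_congr rfl fun j _ => ?_
  rw [Finset.sum_const, nsmul_eq_mul]

/-- with duals initialized at zero, `∑ᵢ αᵢᵏ = 0` for all `k`; and if the
states reach consensus `xᵢᴷ = c`, the next x-update has the stated closed form, and the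
fixed-point condition `xᵢᴷ⁺¹ = c` forces `c = (1/N)∑ f(zᵢ)`. -/
theorem admm_consensus_fixed_point_is_average (N : ℕ) (hN : 0 < N)
    (Nbr : Fin N → Finset (Fin N)) (hsym : ∀ i j, j ∈ Nbr i ↔ i ∈ Nbr j)
    (ρ : ℝ) (hρ : 0 < ρ) (f : Fin N → ℝ)
    (x α : ℕ → Fin N → ℝ) (hα0 : ∀ i, α 0 i = 0)
    (hxupd : ∀ k i, x (k+1) i = (1 / (1 + 2 * ρ * (Nbr i).card))
        * (ρ * (Nbr i).card * x k i + ρ * (∑ j ∈ Nbr i, x k j) - α k i + f i))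
    (hαupd : ∀ k i, α (k+1) i = α k i
        + ρ * (((Nbr i).card : ℝ) * x (k+1) i - ∑ j ∈ Nbr i, x (k+1) j)) :
    (∀ k, ∑ i, α k i = 0) ∧
    ∀ K c, (∀ i, x K i = c) →
      ((∀ i, x (K+1) i = (1 / (1 + 2 * ρ * (Nbr i).card))
          * (2 * ρ * (Nbr i).card * c - α K i + f i)) ∧
        ((∀ i, x (K+1) i = c) → c = (∑ i, f i) / N)) := by
  have hsum : ∀ k, ∑ i, α k i = 0 := by
    intro k
    induction k with
    | zero => simp [hα0]
    | succ k ih =>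
        have := swap_sum Nbr hsym (x (k+1))
        simp only [hαupd, Finset.sum_add_distrib, ih, ← Finset.mul_sum,
          Finset.sum_sub_distrib, this]
        ring
  refine ⟨hsum, fun K c hc => ?_⟩
  have hform : ∀ i, x (K+1) i = (1 / (1 + 2 * ρ * (Nbr i).card))
      * (2 * ρ * (Nbr i).card * c - α K i + f i) := by
    intro i
    rw [hxupd K i]
    have : ∑ j ∈ Nbr i, x K j = ((Nbr i).card : ℝ) * c := by
      rw [Finset.sum_congr rfl fun j _ => hc j, Finset.sum_const, nsmul_eq_mul]
    rw [hc i, this]; ring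
  refine ⟨hform, fun hfix => ?_⟩
  have key : ∀ i, c = f i - α K i := by
    intro i
    have h1 := (hform i).symm.trans (hfix i)
    have hd : (0:ℝ) < 1 + 2 * ρ * (Nbr i).card := by positivity
    field_simp at h1
    nlinarith [h1]
  have : (N : ℝ) * c = ∑ i, f i := by
    calc (N : ℝ) * c = ∑ i : Fin N, c := by
          rw [Finset.sum_const, Finset.card_univ, Fintype.card_fin, nsmul_eq_mul]
      _ = ∑ i, (f i - α K i) := Finset.sum_congr rfl fun i _ => key i
      _ = ∑ i, f i := by rw [Finset.sum_sub_distrib, hsum K]; ring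
  have hN' : (N : ℝ) ≠ 0 := Nat.cast_ne_zero.mpr hN.ne'
  field_simp [hN'] at this ⊢
  linarith [this]
end

section
/- Suppose the graph is complete (every node's neighborhood is all other N−1 nodes) and there is exactly one Byzantine node whose honest state would lie strictly between the minimum and maximum of the honest nodes' states. Then with p = 1 the robust aggregate Γ₁ applied at any honest node is unchanged if the Byzantine's broadcast value exceeds the maximum (or falls below the minimum) of the honest neighbors' states; i.e., extreme outlier attacks have no effect on the robust update. -/
section Sorting

variable {α : Type*} [LinearOrder α] {y : List α} {v : α}

lemma mergeSort_append_singleton_of_forall_le (hy : y.Pairwise (· ≤ ·))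
    (hv : ∀ u ∈ y, u ≤ v) : (y ++ [v]).mergeSort (· ≤ ·) = y ++ [v] :=
  List.mergeSort_eq_self _ <| List.pairwise_append.mpr
    ⟨hy, List.pairwise_singleton _ _, by simpa using hv⟩

lemma mergeSort_append_singleton_of_forall_ge (hy : y.Pairwise (· ≤ ·))
    (hv : ∀ u ∈ y, v ≤ u) : (y ++ [v]).mergeSort (· ≤ ·) = v :: y :=
  List.Perm.eq_of_pairwise' (List.pairwise_mergeSort' _ _) (List.pairwise_cons.mpr ⟨hv, hy⟩)
    (((y ++ [v]).mergeSort_perm _).trans (List.perm_append_singleton _ _))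

end Sorting

section TrimmedSum

variable {y : List ℝ} {v : ℝ}

lemma trimmedSum_one_append_of_forall_le (hy : y.Pairwise (· ≤ ·)) (hv : ∀ u ∈ y, u ≤ v) :
    trimmedSum 1 (y ++ [v]) = y.tail.sum + 2 * (y.tail.sum / (y.length - 1)) := by
  have hmid : ((y ++ [v]).drop 1).take (y.length + 1 - 2 * 1) = y.tail := by
    cases y with
    | nil => rfl
    | cons a t => simp
  simp only [trimmedSum, mergeSort_append_singleton_of_forall_le hy hv, List.length_append,
    List.length_singleton, hmid]
  push_cast
  ring

lemma trimmedSum_one_append_of_forall_ge (hy : y.Pairwise (· ≤ ·)) (hv : ∀ u ∈ y, v ≤ u) :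
    trimmedSum 1 (y ++ [v]) = y.dropLast.sum + 2 * (y.dropLast.sum / (y.length - 1)) := by
  simp only [trimmedSum, mergeSort_append_singleton_of_forall_ge hy hv, List.length_append,
    List.length_singleton, List.drop_one, List.tail_cons, List.dropLast_eq_take]
  push_cast
  ring

end TrimmedSum

theorem trimmedSum_ignores_extreme_outlier_general (y : List ℝ)
    (hy : y.Pairwise (· ≤ ·)) :
    ∀ v v' : ℝ,
      ((∀ u ∈ y, u < v) → (∀ u ∈ y, u < v') →
        trimmedSum 1 (y ++ [v]) = trimmedSum 1 (y ++ [v'])) ∧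
      ((∀ u ∈ y, v < u) → (∀ u ∈ y, v' < u) →
        trimmedSum 1 (y ++ [v]) = trimmedSum 1 (y ++ [v'])) := by
  intro v v'
  constructor
  · intro hv hv'
    rw [trimmedSum_one_append_of_forall_le hy fun u hu => (hv u hu).le,
      trimmedSum_one_append_of_forall_le hy fun u hu => (hv' u hu).le]
  · intro hv hv'
    rw [trimmedSum_one_append_of_forall_ge hy fun u hu => (hv u hu).le,
      trimmedSum_one_append_of_forall_ge hy fun u hu => (hv' u hu).le]

/-- complete graph, one Byzantine among the `N-1` neighbors of an honest
node (so `m = N-2 ≥ 2` honest neighbor values `y`, sorted). With `p = 1`, the robust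
aggregate `Γ₁` of the received values is unchanged whenever the Byzantine's broadcast
exceeds the maximum of the honest values (and likewise when it falls below their
minimum): extreme outlier attacks have no effect. -/
theorem trimmedSum_ignores_extreme_outlier (N : ℕ) (hN : 4 ≤ N) (y : List ℝ)
    (hy : y.Pairwise (· ≤ ·)) (hm : y.length = N - 2) :
    ∀ v v' : ℝ,
      ((∀ u ∈ y, u < v) → (∀ u ∈ y, u < v') →
        trimmedSum 1 (y ++ [v]) = trimmedSum 1 (y ++ [v'])) ∧
      ((∀ u ∈ y, v < u) → (∀ u ∈ y, v' < u) →
        trimmedSum 1 (y ++ [v]) = trimmedSum 1 (y ++ [v'])) :=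
  trimmedSum_ignores_extreme_outlier_general y hy
end
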